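/- arXiv:1606.05271 — 4 statements merged into one kernel-verified Lean document; each statement's English description precedes it below -/
import Mathlib

section
/- For a finite field F_q of characteristic p and any k ≥ 1, the polynomial P_k(T) = Σ_{r ∈ F_q} (T+r)^k in F_q[T] equals -Σ_{γ = ⌊k/q⌋+1}^{⌊k/(q-1)⌋} C(γ-1, k-(q-1)γ) (T^q - T)^{k-(q-1)γ}, and in particular is a polynomial in T^q - T with coefficients in the prime field F_p. -/
/-!
Frobenius gives `(T + r)^q = (T^q - T) + (T + r)`, hence
`P_k = (T^q - T) P_(k - q) + P_(k - q + 1)` for `k ≥ q`, while for `k < q` the power sums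
`∑ r^i` give `P_k = -[k = q - 1]`. Writing `γ = j + 1`, Pascal's rule shows that the right-hand
side obeys the same recurrence with the same initial values.
-/

open Polynomial Finset

section ChooseTerm

variable {R : Type*} [CommRing R] {n : ℕ}

/-- The summand of index `γ = j + 1`, with `n = q - 1`. The guard stands for the bound
`γ ≤ k / n`, so that the sum over `range N` is the same for every `N ≥ k`. -/
def chooseTerm (n k j : ℕ) (u : R) : R :=
  if n * (j + 1) ≤ k then (j.choose (k - n * (j + 1)) : R) * u ^ (k - n * (j + 1)) else 0

theorem chooseTerm_eq_zero_of_le_div_succ (u : R) {k j : ℕ} (h : j + 1 ≤ k / (n + 1)) :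
    chooseTerm n k j u = 0 := by
  have hk := (Nat.le_div_iff_mul_le n.succ_pos).1 h
  have hlt : j < k - n * (j + 1) := by
    rw [show (j + 1) * (n + 1) = n * (j + 1) + (j + 1) by ring] at hk
    omega
  simp [chooseTerm, Nat.choose_eq_zero_of_lt hlt]

theorem chooseTerm_eq_zero_of_div_lt (hn : 0 < n) (u : R) {k j : ℕ} (h : k / n < j + 1) :
    chooseTerm n k j u = 0 :=
  if_neg (not_le.2 ((Nat.lt_mul_div_succ k hn).trans_le (Nat.mul_le_mul_left n h)))

theorem chooseTerm_of_le_div (u : R) {k j : ℕ} (h : j + 1 ≤ k / n) :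
    chooseTerm n k j u = (j.choose (k - n * (j + 1)) : R) * u ^ (k - n * (j + 1)) :=
  if_pos ((Nat.mul_le_mul_left n h).trans (Nat.mul_div_le k n))

theorem chooseTerm_eq_zero_of_le (hn : 0 < n) (u : R) {k j : ℕ} (h : k ≤ j) :
    chooseTerm n k j u = 0 :=
  chooseTerm_eq_zero_of_div_lt hn u (by have := Nat.div_le_self k n; omega)

theorem chooseTerm_zero_of_lt (u : R) {k : ℕ} (h : n < k) : chooseTerm n k 0 u = 0 := by
  simp [chooseTerm, Nat.choose_eq_zero_of_lt (Nat.sub_pos_of_lt h)]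

theorem chooseTerm_succ (hn : 0 < n) (u : R) (k j : ℕ) :
    chooseTerm n k (j + 1) u = u * chooseTerm n (k - (n + 1)) j u + chooseTerm n (k - n) j u := by
  unfold chooseTerm
  rw [show n * (j + 1 + 1) = n * (j + 1) + n by ring]
  have hpos : 0 < n * (j + 1) := by positivity
  generalize n * (j + 1) = m at hpos ⊢
  by_cases h : m + n ≤ k
  · obtain ⟨e, rfl⟩ := Nat.exists_eq_add_of_le h
    rw [if_pos h, if_pos (show m ≤ m + n + e - n by omega), show m + n + e - (m + n) = e by omega,
      show m + n + e - n - m = e by omega]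
    cases e with
    | zero =>
      rw [if_neg (show ¬ m ≤ m + n + 0 - (n + 1) by omega)]
      simp
    | succ e =>
      rw [if_pos (show m ≤ m + n + (e + 1) - (n + 1) by omega),
        show m + n + (e + 1) - (n + 1) - m = e by omega, Nat.choose_succ_succ]
      push_cast
      ring
  · rw [if_neg h, if_neg (by omega), if_neg (by omega)]
    simp

theorem sum_range_chooseTerm_of_le (hn : 0 < n) (u : R) {k : ℕ} (hk : k ≤ n) :
    ∑ j ∈ range k, chooseTerm n k j u = if k = n then 1 else 0 := by
  split_ifs with h
  · subst h
    rw [sum_eq_single_of_mem 0 (mem_range.2 hn)]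
    · simp [chooseTerm]
    · intro j _ hj
      exact chooseTerm_eq_zero_of_div_lt hn u (by rw [Nat.div_self hn]; omega)
  · exact sum_eq_zero fun j _ =>
      chooseTerm_eq_zero_of_div_lt hn u (by rw [Nat.div_eq_of_lt (by omega)]; omega)

theorem sum_range_chooseTerm_of_lt (hn : 0 < n) (u : R) {k : ℕ} (hk : n < k) :
    ∑ j ∈ range k, chooseTerm n k j u =
      u * ∑ j ∈ range (k - (n + 1)), chooseTerm n (k - (n + 1)) j u +
        ∑ j ∈ range (k - n), chooseTerm n (k - n) j u := by
  obtain ⟨k, rfl⟩ : ∃ k', k = k' + 1 := ⟨k - 1, by omega⟩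
  rw [sum_range_succ', chooseTerm_zero_of_lt u hk, add_zero]
  simp only [chooseTerm_succ hn, sum_add_distrib, ← mul_sum]
  rw [eventually_constant_sum (fun _ => chooseTerm_eq_zero_of_le hn u (k := k + 1 - (n + 1)))
      (by omega),
    eventually_constant_sum (fun _ => chooseTerm_eq_zero_of_le hn u (k := k + 1 - n)) (by omega)]

theorem sum_Icc_choose_eq_sum_chooseTerm {q : ℕ} (hq : 0 < q) (u : R) (k : ℕ) :
    ∑ γ ∈ Icc (k / q + 1) (k / (q - 1)),
        ((γ - 1).choose (k - (q - 1) * γ) : R) * u ^ (k - (q - 1) * γ) =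
      ∑ j ∈ range k, chooseTerm (q - 1) k j u := by
  obtain ⟨n, rfl⟩ : ∃ n, q = n + 1 := ⟨q - 1, by omega⟩
  rw [Nat.add_sub_cancel]
  have hdiv := Nat.div_le_self k n
  have hlow : 1 ≤ k / (n + 1) + 1 := Nat.le_add_left 1 _
  calc _ = ∑ γ ∈ Ico 1 (k + 1), chooseTerm n k (γ - 1) u := by
        refine sum_subset_zero_on_sdiff (fun γ hγ => ?_) (fun γ hγ => ?_) (fun γ hγ => ?_)
        · simp only [mem_Icc, mem_Ico] at hγ ⊢
          omega
        · simp only [mem_sdiff, mem_Icc, mem_Ico] at hγ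
          obtain ⟨j, rfl⟩ : ∃ j, γ = j + 1 := ⟨γ - 1, by omega⟩
          rw [Nat.add_sub_cancel]
          by_cases hj : j + 1 ≤ k / (n + 1)
          · exact chooseTerm_eq_zero_of_le_div_succ u hj
          · obtain rfl | hn := n.eq_zero_or_pos
            · simp only [zero_add, Nat.div_one] at hj
              omega
            · exact chooseTerm_eq_zero_of_div_lt hn u (by omega)
        · simp only [mem_Icc] at hγ
          obtain ⟨j, rfl⟩ : ∃ j, γ = j + 1 := ⟨γ - 1, by omega⟩
          rw [Nat.add_sub_cancel, chooseTerm_of_le_div u hγ.2]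
    _ = ∑ j ∈ range k, chooseTerm n k j u := by simp [sum_Ico_eq_sum_range, add_comm]

end ChooseTerm

section FiniteField

variable (F : Type*) [Field F] [Fintype F]

theorem FiniteField.sum_pow_card_sub_one : ∑ x : F, x ^ (Fintype.card F - 1) = -1 := by
  classical
  have hq : 1 < Fintype.card F := Fintype.one_lt_card
  have hunit : ∀ x ∈ univ.erase (0 : F), x ^ (Fintype.card F - 1) = 1 := fun x hx =>
    FiniteField.pow_card_sub_one_eq_one x (ne_of_mem_erase hx)
  rw [← sum_erase univ (zero_pow (by omega)), sum_congr rfl hunit, sum_const,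
    card_erase_of_mem (mem_univ 0), card_univ, nsmul_one, Nat.cast_pred (by omega),
    FiniteField.cast_card_eq_zero, zero_sub]

theorem FiniteField.sum_pow_of_le_card_sub_one {i : ℕ} (hi : i ≤ Fintype.card F - 1) :
    ∑ x : F, x ^ i = if i = Fintype.card F - 1 then -1 else 0 := by
  split_ifs with h
  · rw [h, sum_pow_card_sub_one]
  · exact sum_pow_lt_card_sub_one F i (by omega)

theorem sum_X_add_C_pow_of_le_card_sub_one {m : ℕ} (hm : m ≤ Fintype.card F - 1) :
    ∑ r : F, (X + C r) ^ m = if m = Fintype.card F - 1 then -1 else 0 := by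
  have hterm : ∀ j ∈ range (m + 1), ∑ r : F, C r ^ j * X ^ (m - j) * (m.choose j : F[X]) =
      C (if j = Fintype.card F - 1 then -1 else 0) * X ^ (m - j) * (m.choose j : F[X]) := by
    intro j hj
    rw [← sum_mul, ← sum_mul, ← FiniteField.sum_pow_of_le_card_sub_one F
      (by rw [mem_range] at hj; omega), map_sum]
    simp only [C_pow]
  simp_rw [add_comm X, add_pow]
  rw [sum_comm, sum_congr rfl hterm]
  split_ifs with h
  · rw [sum_eq_single_of_mem m (self_mem_range_succ m)]
    · simp [h]
    · intro j hj hjm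
      rw [if_neg (by rw [mem_range] at hj; omega), C_0, zero_mul, zero_mul]
  · exact sum_eq_zero fun j hj => by
      rw [if_neg (by rw [mem_range] at hj; omega), C_0, zero_mul, zero_mul]

theorem X_add_C_pow_card (r : F) : (X + C r) ^ Fintype.card F = X ^ Fintype.card F + C r := by
  rw [← FiniteField.expand_card, map_add, expand_X, expand_C]

theorem sum_X_add_C_pow_of_card_le {k : ℕ} (hk : Fintype.card F ≤ k) :
    ∑ r : F, (X + C r) ^ k =
      (X ^ Fintype.card F - X) * ∑ r : F, (X + C r) ^ (k - Fintype.card F) +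
        ∑ r : F, (X + C r) ^ (k - Fintype.card F + 1) := by
  rw [mul_sum, ← sum_add_distrib]
  refine sum_congr rfl fun r _ => ?_
  rw [← Nat.sub_add_cancel hk, pow_add, X_add_C_pow_card, Nat.add_sub_cancel, pow_succ]
  ring

theorem sum_X_add_C_pow_eq_neg_sum_chooseTerm (k : ℕ) :
    ∑ r : F, (X + C r) ^ k =
      -∑ j ∈ range k, chooseTerm (Fintype.card F - 1) k j (X ^ Fintype.card F - X) := by
  have hq : 1 < Fintype.card F := Fintype.one_lt_card
  induction k using Nat.strong_induction_on with
  | _ k ih =>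
  rcases lt_or_ge k (Fintype.card F) with hk | hk
  · rw [sum_X_add_C_pow_of_le_card_sub_one F (by omega),
      sum_range_chooseTerm_of_le (by omega) _ (by omega)]
    split_ifs <;> simp
  · rw [sum_X_add_C_pow_of_card_le F hk, ih _ (by omega), ih _ (by omega),
      sum_range_chooseTerm_of_lt (k := k) (by omega) _ (by omega), Nat.sub_add_cancel hq.le,
      show k - (Fintype.card F - 1) = k - Fintype.card F + 1 by omega]
    ring

end FiniteField

theorem power_sum_poly_finite_field_general (F : Type*) [Field F] [Fintype F]
    (k : ℕ) (q : ℕ) (hq : q = Fintype.card F) :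
    ∑ r : F, (X + C r) ^ k =
      - ∑ γ ∈ Finset.Icc (k / q + 1) (k / (q - 1)),
          (((γ - 1).choose (k - (q - 1) * γ) : F[X])) * (X ^ q - X) ^ (k - (q - 1) * γ) := by
  subst hq
  rw [sum_Icc_choose_eq_sum_chooseTerm Fintype.card_pos]
  exact sum_X_add_C_pow_eq_neg_sum_chooseTerm F k

theorem power_sum_poly_finite_field (F : Type*) [Field F] [Fintype F]
    (p : ℕ) [CharP F p] (k : ℕ) (hk : 1 ≤ k) (q : ℕ) (hq : q = Fintype.card F) :
    ∑ r : F, (X + C r) ^ k =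
      - ∑ γ ∈ Finset.Icc (k / q + 1) (k / (q - 1)),
          (((γ - 1).choose (k - (q - 1) * γ) : F[X])) * (X ^ q - X) ^ (k - (q - 1) * γ) :=
  power_sum_poly_finite_field_general F k q hq
end

section
/- Let R be a finite (possibly non-commutative) unital ring of odd prime characteristic p, and suppose R contains a nonzero two-sided ideal I with I² = 0. Then for every k ≥ 1, the sum Σ_{r ∈ R} r^k equals 0. -/
/-!
Since `I² = 0`, for `a ∈ I` the power `(r + a) ^ k = r ^ k + ∑ i < k, r ^ i * a * r ^ (k - 1 - i)`
is affine in `a`. Summed over a coset `r + I` it gives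
`|I| • r ^ k + ∑ i < k, r ^ i * (∑ a ∈ I, a) * r ^ (k - 1 - i)`, and both terms vanish:
`p ∣ |I|` because `I` contains an element of additive order `p`, and `∑ a ∈ I, a = 0` because
pairing `a` with `-a` shows it is killed by `2`, which is invertible as `p` is odd.
-/

open Finset

theorem add_pow_eq_add_sum_of_forall_mul_mul_eq_zero {R : Type*} [Ring R] {a : R}
    (ha : ∀ x, a * x * a = 0) (r : R) (n : ℕ) :
    (r + a) ^ n = r ^ n + ∑ i ∈ range n, r ^ i * a * r ^ (n - 1 - i) := by
  induction n with
  | zero => simp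
  | succ n ih =>
    have hSa : (∑ i ∈ range n, r ^ i * a * r ^ (n - 1 - i)) * a = 0 := by
      rw [sum_mul]
      exact sum_eq_zero fun i _ => by rw [mul_assoc _ a, mul_assoc, ha, mul_zero]
    have hSr : (∑ i ∈ range n, r ^ i * a * r ^ (n - 1 - i)) * r
        = ∑ i ∈ range n, r ^ i * a * r ^ (n - i) := by
      rw [sum_mul]
      refine sum_congr rfl fun i hi => ?_
      rw [mul_assoc, ← pow_succ]
      congr 2
      have := mem_range.mp hi
      omega
    rw [pow_succ, ih, add_mul, mul_add, mul_add, hSa, hSr, ← pow_succ, sum_range_succ]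
    simp only [Nat.add_sub_cancel, Nat.sub_self, pow_zero, mul_one]
    abel

theorem AddSubgroup.sum_eq_sum_quotient_sum {G M : Type*} [AddGroup G] [Fintype G]
    [AddCommMonoid M] (A : AddSubgroup G) [Fintype A] [Fintype (G ⧸ A)] (f : G → M) :
    ∑ g, f g = ∑ q : G ⧸ A, ∑ a : A, f (q.out + a) := by
  let e : (G ⧸ A) × A ≃ G :=
    { toFun := fun x => x.1.out + x.2
      invFun := fun g => ((g : G ⧸ A), ⟨-(g : G ⧸ A).out + g,
        QuotientAddGroup.eq.mp (QuotientAddGroup.out_eq' _)⟩)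
      left_inv := fun ⟨q, a⟩ => by
        have hq : ((q.out + a : G) : G ⧸ A) = q := by
          rw [QuotientAddGroup.mk_add_of_mem _ a.2, QuotientAddGroup.out_eq']
        ext <;> simp [hq]
      right_inv := fun g => by simp }
  rw [← Fintype.sum_prod_type']
  exact (Fintype.sum_equiv e _ _ fun _ => rfl).symm

theorem AddSubgroup.sum_coe_eq_zero_of_odd_char {R : Type*} [Ring R] {p : ℕ} [CharP R p]
    (hodd : Odd p) (A : AddSubgroup R) [Fintype A] : ∑ a : A, (a : R) = 0 := by
  have hneg : -∑ a : A, (a : R) = ∑ a : A, (a : R) := by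
    simpa using Equiv.sum_comp (Equiv.neg A) (fun a : A => (a : R))
  let : Invertible ((2 : ℕ) : R) := invertibleOfCoprime (Nat.coprime_two_left.mpr hodd)
  have htwo : ((2 : ℕ) : R) * ∑ a : A, (a : R) = 0 := by
    rw [Nat.cast_ofNat, two_mul]
    nth_rewrite 1 [← hneg]
    exact neg_add_cancel _
  simpa using congrArg (⅟((2 : ℕ) : R) * ·) htwo

theorem AddSubgroup.natCard_cast_eq_zero_of_ne_bot {R : Type*} [Ring R] {p : ℕ} [CharP R p]
    (hp : p.Prime) {A : AddSubgroup R} (hA : A ≠ ⊥) : (Nat.card A : R) = 0 := by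
  have : Fact p.Prime := ⟨hp⟩
  obtain ⟨⟨a, haA⟩, ha0⟩ := AddSubgroup.ne_bot_iff_exists_ne_zero.mp hA
  have horder : addOrderOf a = p :=
    addOrderOf_eq_prime (by rw [nsmul_eq_mul, CharP.cast_eq_zero, zero_mul])
      (by simpa using ha0)
  rw [CharP.cast_eq_zero_iff R p, ← horder]
  exact A.addOrderOf_dvd_natCard haA

theorem AddSubgroup.sum_add_pow_eq_zero {R : Type*} [Ring R] (A : AddSubgroup R) [Fintype A]
    (hcard : (Nat.card A : R) = 0) (hsum : ∑ a : A, (a : R) = 0)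
    (hA : ∀ a ∈ A, ∀ x, a * x * a = 0) (r : R) (n : ℕ) :
    ∑ a : A, (r + a) ^ n = 0 := by
  simp_rw [add_pow_eq_add_sum_of_forall_mul_mul_eq_zero (hA _ (Subtype.prop _)) r n]
  rw [sum_add_distrib, sum_comm, sum_const, card_univ, ← Nat.card_eq_fintype_card, nsmul_eq_mul,
    hcard, zero_mul, zero_add]
  refine sum_eq_zero fun i _ => ?_
  rw [← sum_mul, ← mul_sum, hsum, mul_zero, zero_mul]

theorem power_sum_vanishes_square_zero_ideal_odd_char_general
    (R : Type*) [Ring R] [Fintype R] (p : ℕ) [CharP R p] (hp : p.Prime) (hodd : Odd p)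
    (I : TwoSidedIdeal R) (hI : I ≠ ⊥)
    (hsq : ∀ x y : R, x ∈ I → y ∈ I → x * y = 0)
    (k : ℕ) :
    ∑ r : R, r ^ k = 0 := by
  classical
  let A := AddSubgroup.ofClass I
  have hA : A ≠ ⊥ := by
    contrapose! hI
    ext x
    rw [TwoSidedIdeal.mem_bot, ← AddSubgroup.mem_bot, ← hI]
    rfl
  rw [A.sum_eq_sum_quotient_sum]
  exact sum_eq_zero fun q _ =>
    A.sum_add_pow_eq_zero (AddSubgroup.natCard_cast_eq_zero_of_ne_bot hp hA)
      (A.sum_coe_eq_zero_of_odd_char hodd)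
      (fun a ha x => hsq _ _ (I.mul_mem_right _ _ ha) ha) _ k

theorem power_sum_vanishes_square_zero_ideal_odd_char
    (R : Type*) [Ring R] [Fintype R] (p : ℕ) [CharP R p] (hp : p.Prime) (hodd : Odd p)
    (I : TwoSidedIdeal R) (hI : I ≠ ⊥)
    (hsq : ∀ x y : R, x ∈ I → y ∈ I → x * y = 0)
    (k : ℕ) (hk : 1 ≤ k) :
    ∑ r : R, r ^ k = 0 :=
  power_sum_vanishes_square_zero_ideal_odd_char_general R p hp hodd I hI hsq k
end

section
/- Let R be a finite unital ring of characteristic 2 containing a two-sided ideal I with I² = 0 and |I| ≥ 4. Then for every k ≥ 1, the sum Σ_{r ∈ R} r^k equals 0. -/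
/-!
Split `R` into the cosets `s + I`. Since `I * I = 0`, expanding `(s + x) ^ k` for `x ∈ I` leaves
only the terms with at most one factor `x`, so summing over `x ∈ I` gives
`|I| • s ^ k + ∑ i < k, s ^ i * (∑ x ∈ I, x) * s ^ (k - 1 - i)`. In characteristic `2` the ideal is an
`𝔽₂`-vector space, so `|I|` is even, and `∑ x ∈ I, x = 0` once `|I| > 2` (transport the sum to the
field with `|I|` elements).
-/

open Finset

theorem AddSubgroup.sum_eq_sum_quotient_sum_add {G M : Type*} [AddGroup G] [AddCommMonoid M]
    [Fintype G] (H : AddSubgroup G) [Fintype (G ⧸ H)] [Fintype H] (f : G → M) :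
    ∑ g, f g = ∑ q : G ⧸ H, ∑ h : H, f (q.out + h) := by
  have hmk (q : G ⧸ H) (h : H) : ((q.out + h : G) : G ⧸ H) = q := by
    rw [QuotientAddGroup.mk_add_of_mem _ h.2, QuotientAddGroup.out_eq']
  have hbij : Function.Bijective fun p : (G ⧸ H) × H => p.1.out + p.2 := by
    refine ⟨fun ⟨q, h⟩ ⟨q', h'⟩ heq => ?_, fun g => ?_⟩
    · obtain rfl : q = q' := by simpa only [hmk] using congrArg ((↑) : G → G ⧸ H) heq
      simpa using heq
    · exact ⟨((g : G ⧸ H), ⟨_, QuotientAddGroup.eq.mp (QuotientAddGroup.out_eq' _)⟩),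
        add_neg_cancel_left _ _⟩
  exact (Fintype.sum_bijective _ hbij _ _ fun _ => rfl).symm.trans (Fintype.sum_prod_type _)

theorem ZMod.finrank_ne_zero_of_one_lt_card (p : ℕ) [Fact p.Prime] (V : Type*) [AddCommGroup V]
    [Module (ZMod p) V] [Fintype V] (hV : 1 < Fintype.card V) :
    Module.finrank (ZMod p) V ≠ 0 :=
  have := Fintype.one_lt_card_iff_nontrivial.mp hV
  Module.finrank_pos.ne'

theorem ZMod.dvd_card_of_one_lt_card (p : ℕ) [Fact p.Prime] (V : Type*) [AddCommGroup V]
    [Module (ZMod p) V] [Fintype V] (hV : 1 < Fintype.card V) : p ∣ Fintype.card V := by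
  rw [Module.card_eq_pow_finrank (K := ZMod p), ZMod.card]
  exact dvd_pow_self p (ZMod.finrank_ne_zero_of_one_lt_card p V hV)

theorem ZMod.sum_univ_eq_zero_of_two_lt_card (p : ℕ) [Fact p.Prime] (V : Type*) [AddCommGroup V]
    [Module (ZMod p) V] [Fintype V] (hV : 2 < Fintype.card V) : ∑ v : V, v = 0 := by
  set n := Module.finrank (ZMod p) V
  have hn : n ≠ 0 := ZMod.finrank_ne_zero_of_one_lt_card p V (by omega)
  let _ : Fintype (GaloisField p n) := Fintype.ofFinite _
  let e : GaloisField p n ≃ₗ[ZMod p] V := LinearEquiv.ofFinrankEq _ _ (GaloisField.finrank p hn)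
  have hsum : ∑ y : GaloisField p n, y ^ 1 = 0 := by
    refine FiniteField.sum_pow_lt_card_sub_one _ 1 ?_
    rw [← Nat.card_eq_fintype_card, GaloisField.card p n hn, ← ZMod.card p,
      ← Module.card_eq_pow_finrank]
    omega
  simp only [pow_one] at hsum
  rw [← e.toEquiv.sum_comp, LinearEquiv.coe_toEquiv, ← map_sum, hsum, map_zero]

theorem add_pow_eq_pow_add_sum_of_mul_pow_mul_eq_zero {R : Type*} [Semiring R] {s x : R}
    (hx : ∀ j, x * s ^ j * x = 0) (k : ℕ) :
    (s + x) ^ k = s ^ k + ∑ i ∈ range k, s ^ i * x * s ^ (k - 1 - i) := by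
  induction k with
  | zero => simp
  | succ k ih =>
    have hxsum : x * ∑ i ∈ range k, s ^ i * x * s ^ (k - 1 - i) = 0 := by
      simp only [mul_sum, ← mul_assoc, hx, zero_mul, sum_const_zero]
    rw [pow_succ', ih, sum_range_succ', add_mul, mul_add, mul_add, hxsum, add_zero, mul_sum]
    simp only [← mul_assoc, ← pow_succ', pow_zero, one_mul, Nat.add_sub_cancel, Nat.sub_zero,
      Nat.sub_sub, Nat.add_comm 1, add_assoc]

theorem sum_add_pow_eq_card_nsmul_add_sum_of_mul_pow_mul_eq_zero {R ι : Type*} [Semiring R]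
    [Fintype ι] {s : R} {v : ι → R} (hv : ∀ a j, v a * s ^ j * v a = 0) (k : ℕ) :
    ∑ a, (s + v a) ^ k =
      Fintype.card ι • s ^ k + ∑ i ∈ range k, s ^ i * (∑ a, v a) * s ^ (k - 1 - i) := by
  simp only [add_pow_eq_pow_add_sum_of_mul_pow_mul_eq_zero (hv _), sum_add_distrib, sum_const,
    card_univ, mul_sum, sum_mul]
  rw [sum_comm]

theorem power_sum_vanishes_square_zero_ideal_char_two_general
    (R : Type*) [Ring R] [Fintype R] [CharP R 2]
    (I : TwoSidedIdeal R)
    (hsq : ∀ x y : R, x ∈ I → y ∈ I → x * y = 0)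
    (hcard : 4 ≤ Nat.card {x : R // x ∈ I})
    (k : ℕ) :
    ∑ r : R, r ^ k = 0 := by
  classical
  let H := AddSubgroup.ofClass I
  let _ : Module (ZMod 2) H := AddCommGroup.zmodModule fun x => Subtype.ext (CharTwo.two_nsmul _)
  have hcardH : 4 ≤ Fintype.card H := by rwa [← Nat.card_eq_fintype_card]
  have hsumH : ∑ x : H, (x : R) = 0 := by
    rw [← AddSubgroup.val_finsetSum, ZMod.sum_univ_eq_zero_of_two_lt_card 2 H (by omega),
      ZeroMemClass.coe_zero]
  have hcardH_zero : (Fintype.card H : R) = 0 :=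
    (CharP.cast_eq_zero_iff R 2 _).mpr (ZMod.dvd_card_of_one_lt_card 2 H (by omega))
  have hsandwich (s : R) (x : H) (j : ℕ) : (x : R) * s ^ j * x = 0 :=
    hsq _ _ (I.mul_mem_right _ _ x.2) x.2
  rw [H.sum_eq_sum_quotient_sum_add]
  refine sum_eq_zero fun q _ => ?_
  rw [sum_add_pow_eq_card_nsmul_add_sum_of_mul_pow_mul_eq_zero (hsandwich q.out), hsumH,
    nsmul_eq_mul, hcardH_zero]
  simp

theorem power_sum_vanishes_square_zero_ideal_char_two
    (R : Type*) [Ring R] [Fintype R] [CharP R 2]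
    (I : TwoSidedIdeal R)
    (hsq : ∀ x y : R, x ∈ I → y ∈ I → x * y = 0)
    (hcard : 4 ≤ Nat.card {x : R // x ∈ I})
    (k : ℕ) (hk : 1 ≤ k) :
    ∑ r : R, r ^ k = 0 :=
  power_sum_vanishes_square_zero_ideal_char_two_general R I hsq hcard k
end

section
/- For the matrix ring R = M₂(F₂) and k ≥ 1, the sum Σ_{A ∈ R} A^k equals the identity matrix if k > 1 and k ≡ 0, 1, or 5 mod 6, and equals the zero matrix otherwise. -/
/-!
A singular `A ∈ M₂(F₂)` satisfies `A ^ 2 = tr A • A`, so `A ^ 3 = A ^ 2`, and an invertible one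
lies in `GL₂(F₂) ≅ S₃`, of exponent 6; either way `A ^ 8 = A ^ 2`. Hence `k ↦ ∑ A, A ^ k` is
periodic with period 6 from `k = 2` on, and it suffices to compute it for `k < 8`.
-/

theorem Nat.eq_of_eventually_periodic {α : Type*} {f g : ℕ → α} {n p : ℕ} (hp : 0 < p)
    (hf : ∀ m ≥ n, f (m + p) = f m) (hg : ∀ m ≥ n, g (m + p) = g m)
    (h : ∀ m < n + p, f m = g m) (m : ℕ) : f m = g m := by
  induction m using Nat.strong_induction_on with
  | _ m ih =>
    by_cases hm : m < n + p
    · exact h m hm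
    · obtain ⟨m', hm', rfl⟩ : ∃ m' ≥ n, m = m' + p := ⟨m - p, by omega, by omega⟩
      rw [hf m' hm', hg m' hm', ih m' (by omega)]

theorem pow_add_eq_pow_of_le {M : Type*} [Monoid M] {a : M} {n p m : ℕ}
    (h : a ^ (n + p) = a ^ n) (hm : n ≤ m) : a ^ (m + p) = a ^ m := by
  obtain ⟨d, rfl⟩ := Nat.exists_eq_add_of_le hm
  rw [add_right_comm, pow_add, h, ← pow_add]

theorem Matrix.pow_eight_eq_pow_two_zmod_two (A : Matrix (Fin 2) (Fin 2) (ZMod 2)) :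
    A ^ 8 = A ^ 2 := by
  revert A
  decide

theorem power_sum_M2_F2_general (k : ℕ) :
    ∑ A : Matrix (Fin 2) (Fin 2) (ZMod 2), A ^ k =
      if 1 < k ∧ (k % 6 = 0 ∨ k % 6 = 1 ∨ k % 6 = 5) then 1 else 0 := by
  revert k
  refine Nat.eq_of_eventually_periodic (n := 2) (p := 6) (by norm_num) ?_ ?_ ?_
  · intro m hm
    exact Finset.sum_congr rfl fun A _ =>
      pow_add_eq_pow_of_le A.pow_eight_eq_pow_two_zmod_two hm
  · intro m hm
    rw [Nat.add_mod_right]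
    simp only [show 1 < m + 6 by omega, show 1 < m by omega]
  · intro m hm
    interval_cases m <;> decide

theorem power_sum_M2_F2 (k : ℕ) (hk : 1 ≤ k) :
    ∑ A : Matrix (Fin 2) (Fin 2) (ZMod 2), A ^ k =
      if 1 < k ∧ (k % 6 = 0 ∨ k % 6 = 1 ∨ k % 6 = 5) then 1 else 0 :=
  power_sum_M2_F2_general k
end
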